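/- arXiv:1808.03053 — 2 statements merged into one kernel-verified Lean document; each statement's English description precedes it below -/
import Mathlib

section
/- Let X ⊂ R^n (n ≥ 2) be a disconnected set whose closure Cl(X) is connected. Then for every r > sqrt(n)/2, the r-offset discretization Δ_r(X) = U(X,r) ∩ Z^n is (n−1)-connected. -/
noncomputable section

/-- Embedding of an integer point into Euclidean `n`-space. -/
def toE (n : ℕ) (p : Fin n → ℤ) : EuclideanSpace ℝ (Fin n) := WithLp.toLp 2 (fun i => (p i : ℝ))

/-- Two integer points are `k`-adjacent iff they are distinct, all coordinates differ
by at most 1, and at most `n - k` coordinates differ. -/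
def kAdj (n k : ℕ) (p q : Fin n → ℤ) : Prop :=
  p ≠ q ∧ (∀ i, |p i - q i| ≤ 1) ∧
    (Finset.univ.filter (fun i => p i ≠ q i)).card ≤ n - k

/-- A set of integer points is `k`-connected iff any two of its points are joined by a
path inside the set whose consecutive points are `k`-adjacent. -/
def kConn (n k : ℕ) (S : Set (Fin n → ℤ)) : Prop :=
  ∀ p ∈ S, ∀ q ∈ S,
    Relation.ReflTransGen (fun a b => a ∈ S ∧ b ∈ S ∧ kAdj n k a b) p q

/-- The closed `r`-offset (closed `r`-neighborhood) of `X`. -/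
def offset (n : ℕ) (X : Set (EuclideanSpace ℝ (Fin n))) (r : ℝ) :
    Set (EuclideanSpace ℝ (Fin n)) := ⋃ x ∈ X, Metric.closedBall x r

/-- The `r`-offset discretization of `X`: the integer points in the `r`-offset. -/
def disc (n : ℕ) (X : Set (EuclideanSpace ℝ (Fin n))) (r : ℝ) :
    Set (Fin n → ℤ) := {p | toE n p ∈ offset n X r}

/-!
From a lattice point `p` one reaches the coordinatewise rounding of a point `x` by unit steps,
each moving one coordinate towards its rounded value; since the rounded value is within `1 / 2` of
`x`, no step increases the distance to `x`. So every point of `Δ_r(X)` is joined inside `Δ_r(X)`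
to the rounding of a point of `X`. A rounding lies within `√n / 2` of the rounded point, so for
`x, y ∈ Cl(X)` at distance `< ε` the walk from the rounding of `x` to that of `y` stays within
`√n / 2 + 2ε ≤ r` of a point of `X`; the connectedness of `Cl(X)` then joins the roundings of any
two of its points.
-/

open Relation

section EuclideanDist

variable {ι : Type*} [Fintype ι]

lemma dist_le_dist_of_forall_abs_sub_le {x y z : EuclideanSpace ℝ ι}
    (h : ∀ i, |y i - x i| ≤ |z i - x i|) : dist y x ≤ dist z x := by
  rw [EuclideanSpace.dist_eq, EuclideanSpace.dist_eq]
  gcongr with i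
  simpa only [Real.dist_eq] using h i

lemma dist_le_sqrt_card_mul_of_forall_abs_sub_le {x y : EuclideanSpace ℝ ι} {c : ℝ}
    (hc : 0 ≤ c) (h : ∀ i, |y i - x i| ≤ c) : dist y x ≤ √(Fintype.card ι) * c := by
  calc dist y x = √(∑ i, |y i - x i| ^ 2) := by simp only [EuclideanSpace.dist_eq, Real.dist_eq]
    _ ≤ √(∑ _i : ι, c ^ 2) := by gcongr with i; exact h i
    _ = √(Fintype.card ι) * c := by
      rw [Finset.sum_const, Finset.card_univ, nsmul_eq_mul, Real.sqrt_mul (Nat.cast_nonneg _),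
        Real.sqrt_sq hc]

end EuclideanDist

section Lattice

variable {n k : ℕ} {X : Set (EuclideanSpace ℝ (Fin n))} {r : ℝ}

lemma mem_disc_iff {p : Fin n → ℤ} :
    p ∈ disc n X r ↔ ∃ x ∈ X, dist (toE n p) x ≤ r := by
  simp [disc, offset, Metric.mem_closedBall]

def roundLattice (x : EuclideanSpace ℝ (Fin n)) : Fin n → ℤ := fun i => round (x i)

lemma dist_toE_roundLattice_le (x : EuclideanSpace ℝ (Fin n)) :
    dist (toE n (roundLattice x)) x ≤ √n / 2 := by
  have h := dist_le_sqrt_card_mul_of_forall_abs_sub_le (x := x) (y := toE n (roundLattice x))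
    (c := 1 / 2) (by norm_num) fun i => by
      rw [abs_sub_comm]; exact abs_sub_round (x i)
  simpa [div_eq_mul_inv] using h

lemma kAdj_symm {p q : Fin n → ℤ} (h : kAdj n k p q) : kAdj n k q p := by
  obtain ⟨hne, hcoord, hcard⟩ := h
  exact ⟨hne.symm, fun i => abs_sub_comm (p i) (q i) ▸ hcoord i,
    by simpa only [ne_comm] using hcard⟩

lemma kAdj_update_add (p : Fin n → ℤ) (i : Fin n) {s : ℤ} (hs : |s| = 1) :
    kAdj n (n - 1) p (Function.update p i (p i + s)) := by
  refine ⟨fun h => ?_, fun j => ?_, ?_⟩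
  · have := congrFun h i
    simp only [Function.update_self] at this
    grind
  · rcases eq_or_ne j i with rfl | hj
    · simp [hs]
    · simp [hj]
  · have hsub : Finset.univ.filter (fun j => p j ≠ Function.update p i (p i + s) j) ⊆ {i} :=
      fun j hj => by
        by_contra hji
        simp_all [Function.update_of_ne (Finset.mem_singleton.not.1 hji)]
    have := (Finset.card_le_card hsub).trans (Finset.card_singleton i).le
    have := i.pos
    omega

/-- The step relation in the definition of `kConn`. -/
def kAdjIn (n k : ℕ) (S : Set (Fin n → ℤ)) (a b : Fin n → ℤ) : Prop :=
  a ∈ S ∧ b ∈ S ∧ kAdj n k a b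

instance {S : Set (Fin n → ℤ)} : Std.Symm (kAdjIn n k S) where
  symm _ _ h := ⟨h.2.1, h.1, kAdj_symm h.2.2⟩

lemma reflTransGen_kAdjIn_mono {S T : Set (Fin n → ℤ)} (hST : S ⊆ T)
    {p q : Fin n → ℤ} (h : ReflTransGen (kAdjIn n k S) p q) : ReflTransGen (kAdjIn n k T) p q :=
  ReflTransGen.mono (fun _ _ hab => ⟨hST hab.1, hST hab.2.1, hab.2.2⟩) _ _ h

lemma abs_sub_le_of_step_toward {a b : ℤ} {t : ℝ} (hab : a ≠ b) (hb : |(b : ℝ) - t| ≤ 1 / 2) :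
    |((a + if a < b then 1 else -1 : ℤ) : ℝ) - t| ≤ |(a : ℝ) - t| := by
  have hb' := abs_le.1 hb
  have := neg_abs_le ((a : ℝ) - t)
  have := le_abs_self ((a : ℝ) - t)
  split_ifs with h
  · have : (a : ℝ) + 1 ≤ b := by exact_mod_cast h
    push_cast
    exact abs_le.2 ⟨by linarith, by linarith⟩
  · have : (b : ℝ) + 1 ≤ a := by exact_mod_cast (lt_of_le_of_ne (not_lt.1 h) hab.symm)
    push_cast
    exact abs_le.2 ⟨by linarith, by linarith⟩

lemma exists_kAdj_closer_roundLattice (x : EuclideanSpace ℝ (Fin n)) {p : Fin n → ℤ}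
    (hp : p ≠ roundLattice x) :
    ∃ p', kAdj n (n - 1) p p' ∧ dist (toE n p') x ≤ dist (toE n p) x ∧
      ∑ i, (p' i - roundLattice x i).natAbs < ∑ i, (p i - roundLattice x i).natAbs := by
  obtain ⟨i, hi⟩ := Function.ne_iff.1 hp
  set q := roundLattice x
  set s : ℤ := if p i < q i then 1 else -1 with hs
  refine ⟨Function.update p i (p i + s), kAdj_update_add p i (by rw [hs]; split_ifs <;> simp),
    dist_le_dist_of_forall_abs_sub_le fun j => ?_,
    Finset.sum_lt_sum (fun j _ => ?_) ⟨i, Finset.mem_univ i, ?_⟩⟩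
  · rcases eq_or_ne j i with rfl | hj
    · have hq : |(q j : ℝ) - x j| ≤ 1 / 2 := abs_sub_comm (x j) _ ▸ abs_sub_round (x j)
      simpa [toE, hs, Int.cast_ite] using abs_sub_le_of_step_toward hi hq
    · simp [toE, hj]
  · rcases eq_or_ne j i with rfl | hj
    · simp only [Function.update_self, hs]; split_ifs <;> omega
    · simp [hj]
  · simp only [Function.update_self, hs]; split_ifs <;> omega

lemma reflTransGen_kAdjIn_roundLattice (x : EuclideanSpace ℝ (Fin n)) (p : Fin n → ℤ) :
    ReflTransGen (kAdjIn n (n - 1) {a | dist (toE n a) x ≤ dist (toE n p) x}) p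
      (roundLattice x) := by
  induction h : ∑ i, (p i - roundLattice x i).natAbs using Nat.strong_induction_on
    generalizing p with
  | _ m ih =>
    by_cases hp : p = roundLattice x
    · rw [← hp]
    obtain ⟨p', hadj, hdist, hlt⟩ := exists_kAdj_closer_roundLattice x hp
    exact .head ⟨le_refl (dist (toE n p) x), hdist, hadj⟩
      (reflTransGen_kAdjIn_mono (fun _ ha => le_trans ha hdist) (ih _ (h ▸ hlt) p' rfl))

lemma reflTransGen_kAdjIn_disc_roundLattice {p : Fin n → ℤ} {x : EuclideanSpace ℝ (Fin n)}
    (hx : x ∈ X) (hpx : dist (toE n p) x ≤ r) :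
    ReflTransGen (kAdjIn n (n - 1) (disc n X r)) p (roundLattice x) :=
  reflTransGen_kAdjIn_mono (fun _ ha => mem_disc_iff.2 ⟨x, hx, le_trans ha hpx⟩)
    (reflTransGen_kAdjIn_roundLattice x p)

lemma reflTransGen_roundLattice_of_dist_lt {ε : ℝ} {x y : EuclideanSpace ℝ (Fin n)}
    (hr : √n / 2 + 2 * ε ≤ r) (hy : y ∈ closure X)
    (hxy : dist x y < ε) :
    ReflTransGen (kAdjIn n (n - 1) (disc n X r)) (roundLattice x) (roundLattice y) := by
  obtain ⟨z, hz, hyz⟩ := Metric.mem_closure_iff.1 hy ε (dist_nonneg.trans_lt hxy)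
  refine reflTransGen_kAdjIn_mono (fun a ha => mem_disc_iff.2 ⟨z, hz, ?_⟩)
    (reflTransGen_kAdjIn_roundLattice y (roundLattice x))
  calc dist (toE n a) z ≤ dist (toE n a) y + dist y z := dist_triangle _ _ _
    _ ≤ dist (toE n (roundLattice x)) x + dist x y + dist y z := by
      gcongr; exact le_trans ha (dist_triangle _ _ _)
    _ ≤ r := by linarith [dist_toE_roundLattice_le x]

end Lattice

theorem disc_conn_of_disconnected_general (n : ℕ)
    (X : Set (EuclideanSpace ℝ (Fin n)))
    (hcl : IsConnected (closure X))
    (r : ℝ) (hr : Real.sqrt n / 2 < r) :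
    kConn n (n - 1) (disc n X r) := by
  intro p hp q hq
  obtain ⟨x, hx, hpx⟩ := mem_disc_iff.1 hp
  obtain ⟨y, hy, hqy⟩ := mem_disc_iff.1 hq
  have hε : 0 < (r - √n / 2) / 2 := by linarith
  have hround : ReflTransGen (kAdjIn n (n - 1) (disc n X r)) (roundLattice x) (roundLattice y) :=
    hcl.isPreconnected.induction₂
      (fun a b => ReflTransGen (kAdjIn n (n - 1) (disc n X r)) (roundLattice a) (roundLattice b))
      (fun a _ => by
        filter_upwards [self_mem_nhdsWithin,
          mem_nhdsWithin_of_mem_nhds (Metric.ball_mem_nhds a hε)] with b hb hab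
        exact reflTransGen_roundLattice_of_dist_lt (by linarith) hb (Metric.mem_ball'.1 hab))
      (fun _ _ _ _ _ _ => ReflTransGen.trans) (fun _ _ _ _ => symm)
      (subset_closure hx) (subset_closure hy)
  exact (reflTransGen_kAdjIn_disc_roundLattice hx hpx).trans
    (hround.trans (symm (reflTransGen_kAdjIn_disc_roundLattice hy hqy)))

/-- If `X ⊆ ℝ^n` (`n ≥ 2`) is disconnected but its closure is connected, then for every
`r > √n / 2` the `r`-offset discretization of `X` is `(n-1)`-connected. -/
theorem disc_conn_of_disconnected (n : ℕ) (hn : 2 ≤ n)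
    (X : Set (EuclideanSpace ℝ (Fin n)))
    (hX : ¬ IsConnected X) (hcl : IsConnected (closure X))
    (r : ℝ) (hr : Real.sqrt n / 2 < r) :
    kConn n (n - 1) (disc n X r) :=
  disc_conn_of_disconnected_general n X hcl r hr
end
end

section
/- If X ⊆ R^n (n ≥ 2) is a connected set, then for every r ≥ sqrt(n−1)/2 the offset discretization Δ_r(X) = U(X,r) ∩ Z^n is 0-connected. -/
noncomputable section

/-!
A point of `ℝⁿ` farther than `r` from `ℤⁿ` has no integer coordinate, since rounding the other
`n - 1` coordinates would give a lattice point within `√(n - 1) / 2 ≤ r`; so it lies in an open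
unit cube. If `x ∈ X` is such a point, connectedness forces `X` to meet the closed cube around `x`
in a point within `r` of `ℤⁿ`, whose rounding is a vertex of that cube and belongs to `Δ_r(X)`.
Hence `X` is covered by the open cells `{y | ‖y - v‖∞ < 1}`, `v ∈ Δ_r(X)`. Lattice points whose
cells meet are `0`-adjacent, so the cells of one `0`-component are disjoint from those of the
others, and connectedness of `X` leaves a single component. Finally every `p ∈ Δ_r(X)`, within `r`
of some `x ∈ X`, is joined to the rounding of `x` by moving all coordinates one step towards it,
which never increases the distance to `x`.
-/

open Relation Set

section

variable {n : ℕ}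

def kStep (n k : ℕ) (S : Set (Fin n → ℤ)) (a b : Fin n → ℤ) : Prop :=
  a ∈ S ∧ b ∈ S ∧ kAdj n k a b

section Adjacency

variable {k : ℕ} {S : Set (Fin n → ℤ)} {p q : Fin n → ℤ}

theorem kAdj.symm (h : kAdj n k p q) : kAdj n k q p := by
  obtain ⟨hne, hle, hcard⟩ := h
  refine ⟨hne.symm, fun i => abs_sub_comm (p i) (q i) ▸ hle i, ?_⟩
  simpa only [ne_comm] using hcard

theorem kAdj_zero_iff : kAdj n 0 p q ↔ p ≠ q ∧ ∀ i, |p i - q i| ≤ 1 := by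
  refine ⟨fun h => ⟨h.1, h.2.1⟩, fun h => ⟨h.1, h.2, ?_⟩⟩
  simpa using Finset.card_filter_le (Finset.univ : Finset (Fin n)) (fun i => p i ≠ q i)

instance : Std.Symm (kStep n k S) := ⟨fun _ _ ⟨ha, hb, h⟩ => ⟨hb, ha, h.symm⟩⟩

theorem reflTransGen_kStep_symm (h : ReflTransGen (kStep n k S) p q) :
    ReflTransGen (kStep n k S) q p :=
  ReflTransGen.stdSymm.symm _ _ h

theorem reflTransGen_kStep_mono {T : Set (Fin n → ℤ)} (hST : S ⊆ T)
    (h : ReflTransGen (kStep n k S) p q) : ReflTransGen (kStep n k T) p q :=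
  ReflTransGen.mono (fun _ _ ⟨ha, hb, h⟩ => ⟨hST ha, hST hb, h⟩) _ _ h

theorem reflTransGen_kStep_zero_of_abs_sub_le_one (hp : p ∈ S) (hq : q ∈ S)
    (h : ∀ i, |p i - q i| ≤ 1) : ReflTransGen (kStep n 0 S) p q := by
  by_cases hpq : p = q
  · exact hpq ▸ ReflTransGen.refl
  · exact ReflTransGen.single ⟨hp, hq, kAdj_zero_iff.mpr ⟨hpq, h⟩⟩

end Adjacency

section Geometry

variable {x : EuclideanSpace ℝ (Fin n)}

@[simp]
theorem toE_apply (p : Fin n → ℤ) (i : Fin n) : toE n p i = p i := rfl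

def roundPt (x : EuclideanSpace ℝ (Fin n)) : Fin n → ℤ := fun i => round (x i)

theorem dist_toE_eq_sqrt (p : Fin n → ℤ) :
    dist (toE n p) x = √(∑ i, (x i - p i) ^ 2) := by
  simp only [EuclideanSpace.dist_eq, Real.dist_eq, sq_abs, toE_apply, ← neg_sub (x _),
    neg_sq]

theorem dist_toE_le_dist_toE {p q : Fin n → ℤ}
    (h : ∀ i, |x i - p i| ≤ |x i - q i|) : dist (toE n p) x ≤ dist (toE n q) x := by
  rw [dist_toE_eq_sqrt, dist_toE_eq_sqrt]
  exact Real.sqrt_le_sqrt (Finset.sum_le_sum fun i _ => sq_le_sq.mpr (h i))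

theorem dist_toE_roundPt_le (p : Fin n → ℤ) : dist (toE n (roundPt x)) x ≤ dist (toE n p) x :=
  dist_toE_le_dist_toE fun i => round_le (x i) (p i)

theorem dist_toE_roundPt_le_of_eq_intCast {i₀ : Fin n} {m : ℤ} (hm : x i₀ = m) :
    dist (toE n (roundPt x)) x ≤ √(n - 1) / 2 := by
  have hsq : ∀ i, (x i - roundPt x i) ^ 2 ≤ 1 / 4 - if i = i₀ then 1 / 4 else 0 := by
    intro i
    split_ifs with h
    · simp [h, roundPt, hm]
    · calc (x i - roundPt x i) ^ 2 = |x i - round (x i)| ^ 2 := (sq_abs _).symm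
        _ ≤ (1 / 2) ^ 2 := by gcongr; exact abs_sub_round (x i)
        _ = 1 / 4 - 0 := by norm_num
  have hsum : ∑ i, (x i - roundPt x i) ^ 2 ≤ (n - 1) / 4 :=
    calc ∑ i, (x i - roundPt x i) ^ 2
        ≤ ∑ i, (1 / 4 - if i = i₀ then (1 : ℝ) / 4 else 0) := Finset.sum_le_sum fun i _ => hsq i
      _ = (n - 1) / 4 := by
          simp only [Finset.sum_sub_distrib, Finset.sum_const, Finset.card_univ, Fintype.card_fin,
            nsmul_eq_mul, Finset.sum_ite_eq', Finset.mem_univ, if_true]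
          ring
  calc dist (toE n (roundPt x)) x ≤ √((n - 1) / 4) := by
        rw [dist_toE_eq_sqrt]; exact Real.sqrt_le_sqrt hsum
    _ = √(n - 1) / 2 := by
        rw [Real.sqrt_div' _ (by norm_num), show (4 : ℝ) = 2 ^ 2 by norm_num,
          Real.sqrt_sq (by norm_num)]

end Geometry

section Cubes

variable {x z : EuclideanSpace ℝ (Fin n)} {b v w : Fin n → ℤ}

def openCube (b : Fin n → ℤ) : Set (EuclideanSpace ℝ (Fin n)) :=
  {x | ∀ i, (b i : ℝ) < x i ∧ x i < b i + 1}

def closedCube (b : Fin n → ℤ) : Set (EuclideanSpace ℝ (Fin n)) :=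
  {x | ∀ i, (b i : ℝ) ≤ x i ∧ x i ≤ b i + 1}

def cell (v : Fin n → ℤ) : Set (EuclideanSpace ℝ (Fin n)) := {x | ∀ i, |x i - v i| < 1}

theorem isOpen_openCube : IsOpen (openCube b) := by
  simp only [openCube, Set.ofPred_forall, Set.ofPred_and]
  exact isOpen_iInter_of_finite fun i =>
    (isOpen_lt (by fun_prop) (by fun_prop)).inter (isOpen_lt (by fun_prop) (by fun_prop))

theorem isClosed_closedCube : IsClosed (closedCube b) := by
  simp only [closedCube, Set.ofPred_forall, Set.ofPred_and]
  exact isClosed_iInter fun i =>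
    (isClosed_le (by fun_prop) (by fun_prop)).inter (isClosed_le (by fun_prop) (by fun_prop))

theorem isOpen_cell : IsOpen (cell v) := by
  rw [cell, Set.ofPred_forall]
  exact isOpen_iInter_of_finite fun i => isOpen_lt (by fun_prop) (by fun_prop)

theorem closure_openCube_subset : closure (openCube b) ⊆ closedCube b :=
  closure_minimal (fun _ hx i => ⟨(hx i).1.le, (hx i).2.le⟩) isClosed_closedCube

theorem mem_closedCube_floor (x : EuclideanSpace ℝ (Fin n)) :
    x ∈ closedCube (fun i => ⌊x i⌋) :=
  fun _ => ⟨Int.floor_le _, (Int.lt_floor_add_one _).le⟩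

theorem mem_openCube_of_mem_closedCube {r : ℝ} (hr : √(n - 1) / 2 ≤ r) (hz : z ∈ closedCube b)
    (hfar : r < dist (toE n (roundPt z)) z) : z ∈ openCube b := by
  have hint : ∀ i (m : ℤ), z i ≠ m := fun i m hm =>
    (hfar.trans_le (dist_toE_roundPt_le_of_eq_intCast hm)).not_ge hr
  refine fun i => ⟨(hz i).1.lt_of_ne (hint i _).symm, (hz i).2.lt_of_ne ?_⟩
  simpa using hint i (b i + 1)

theorem mem_cell_roundPt (x : EuclideanSpace ℝ (Fin n)) : x ∈ cell (roundPt x) :=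
  fun i => (abs_sub_round (x i)).trans_lt (by norm_num)

theorem abs_round_sub_lt_one {a c : ℝ} {m : ℤ} (ha : (m : ℝ) ≤ a ∧ a ≤ m + 1)
    (hc : (m : ℝ) < c ∧ c < m + 1) : |c - round a| < 1 := by
  have h := abs_le.mp (abs_sub_round a)
  have hlo : m - 1 < round a := Int.cast_lt (R := ℝ).mp (by push_cast; linarith)
  have hhi : round a < m + 2 := Int.cast_lt (R := ℝ).mp (by push_cast; linarith)
  obtain hround | hround : round a = m ∨ round a = m + 1 := by omega
  all_goals rw [hround, abs_lt]; push_cast; constructor <;> linarith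

theorem mem_cell_roundPt_of_mem_closedCube (hz : z ∈ closedCube b) (hx : x ∈ openCube b) :
    x ∈ cell (roundPt z) :=
  fun i => abs_round_sub_lt_one (hz i) (hx i)

theorem abs_sub_le_one_of_mem_cell (hv : x ∈ cell v) (hw : x ∈ cell w) (i : Fin n) :
    |v i - w i| ≤ 1 := by
  have h : |((v i - w i : ℤ) : ℝ)| < 2 := by
    calc |((v i - w i : ℤ) : ℝ)| = |(x i - w i) - (x i - v i)| := by push_cast; ring_nf
      _ ≤ |x i - w i| + |x i - v i| := abs_sub _ _
      _ < 2 := by linarith [hv i, hw i]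
  have h' : |v i - w i| < 2 := by exact_mod_cast h
  omega

end Cubes

section Walk

variable {x : EuclideanSpace ℝ (Fin n)} {p c : Fin n → ℤ}

def stepToward (p c : Fin n → ℤ) : Fin n → ℤ := fun i =>
  if p i < c i then p i + 1 else if c i < p i then p i - 1 else p i

theorem kAdj_stepToward (h : p ≠ c) : kAdj n 0 p (stepToward p c) := by
  obtain ⟨i, hi⟩ := Function.ne_iff.mp h
  refine kAdj_zero_iff.mpr ⟨fun heq => ?_, fun j => ?_⟩
  · have := congrFun heq i
    simp only [stepToward] at this
    split_ifs at this <;> omega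
  · simp only [stepToward]
    split_ifs <;> simp

theorem sum_natAbs_stepToward_lt (h : p ≠ c) :
    ∑ i, (stepToward p c i - c i).natAbs < ∑ i, (p i - c i).natAbs := by
  obtain ⟨i, hi⟩ := Function.ne_iff.mp h
  refine Finset.sum_lt_sum (fun j _ => ?_) ⟨i, Finset.mem_univ i, ?_⟩
  all_goals simp only [stepToward]; split_ifs <;> omega

theorem abs_sub_stepToward_roundPt_le (i : Fin n) :
    |x i - stepToward p (roundPt x) i| ≤ |x i - p i| := by
  have h : -(1 / 2) ≤ x i - roundPt x i ∧ x i - roundPt x i ≤ 1 / 2 :=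
    abs_le.mp (abs_sub_round (x i))
  simp only [stepToward]
  rcases lt_trichotomy (p i) (roundPt x i) with hlt | heq | hgt
  · have : (p i : ℝ) + 1 ≤ roundPt x i := by exact_mod_cast hlt
    rw [if_pos hlt, abs_of_nonneg (by linarith : (0 : ℝ) ≤ x i - p i), abs_le]
    push_cast
    constructor <;> linarith
  · simp [heq]
  · have : (roundPt x i : ℝ) + 1 ≤ p i := by exact_mod_cast hgt
    rw [if_neg hgt.not_gt, if_pos hgt, abs_of_nonpos (by linarith : x i - p i ≤ 0), abs_le]
    push_cast
    constructor <;> linarith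

theorem reflTransGen_roundPt {r : ℝ} (hp : dist (toE n p) x ≤ r) :
    ReflTransGen (kStep n 0 {q | dist (toE n q) x ≤ r}) p (roundPt x) := by
  induction hN : ∑ i, (p i - roundPt x i).natAbs using Nat.strong_induction_on generalizing p
    with
  | _ N ih =>
    by_cases h : p = roundPt x
    · exact h ▸ ReflTransGen.refl
    have hstep : dist (toE n (stepToward p (roundPt x))) x ≤ r :=
      (dist_toE_le_dist_toE abs_sub_stepToward_roundPt_le).trans hp
    exact ReflTransGen.head ⟨hp, hstep, kAdj_stepToward h⟩
      (ih _ (hN ▸ sum_natAbs_stepToward_lt h) hstep rfl)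

end Walk

section Connectivity

variable {X : Set (EuclideanSpace ℝ (Fin n))} {r : ℝ} {x : EuclideanSpace ℝ (Fin n)}
  {p : Fin n → ℤ}

theorem mem_disc : p ∈ disc n X r ↔ ∃ x ∈ X, dist (toE n p) x ≤ r := by
  simp [disc, offset]

theorem reflTransGen_roundPt_disc (hx : x ∈ X) (hp : dist (toE n p) x ≤ r) :
    ReflTransGen (kStep n 0 (disc n X r)) p (roundPt x) :=
  reflTransGen_kStep_mono (fun _ hq => mem_disc.mpr ⟨x, hx, hq⟩) (reflTransGen_roundPt hp)

theorem reflTransGen_of_isPreconnected {S : Set (Fin n → ℤ)} (hX : IsPreconnected X)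
    (hcover : X ⊆ ⋃ v ∈ S, cell v) {v w : Fin n → ℤ} (hv : v ∈ S) (hw : w ∈ S)
    {y : EuclideanSpace ℝ (Fin n)} (hx : x ∈ X ∩ cell v) (hy : y ∈ X ∩ cell w) :
    ReflTransGen (kStep n 0 S) v w := by
  set C := {u ∈ S | ReflTransGen (kStep n 0 S) v u}
  have hC : ∀ u ∈ C, ∀ u' ∈ S, ∀ z, z ∈ cell u → z ∈ cell u' → u' ∈ C :=
    fun u hu u' hu' z hz hz' => ⟨hu', hu.2.trans
      (reflTransGen_kStep_zero_of_abs_sub_le_one hu.1 hu' (abs_sub_le_one_of_mem_cell hz hz'))⟩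
  have hXC : X ⊆ ⋃ u ∈ C, cell u := by
    refine hX.subset_left_of_subset_union (v := ⋃ u ∈ S \ C, cell u)
      (isOpen_biUnion fun _ _ => isOpen_cell) (isOpen_biUnion fun _ _ => isOpen_cell) ?_ ?_
      ⟨x, hx.1, mem_biUnion ⟨hv, ReflTransGen.refl⟩ hx.2⟩
    · refine Set.disjoint_left.mpr fun z hzC hzS => ?_
      obtain ⟨u, hu, hzu⟩ := mem_iUnion₂.mp hzC
      obtain ⟨u', hu', hzu'⟩ := mem_iUnion₂.mp hzS
      exact hu'.2 (hC u hu u' hu'.1 z hzu hzu')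
    · intro z hz
      obtain ⟨u, hu, hzu⟩ := mem_iUnion₂.mp (hcover hz)
      by_cases huC : u ∈ C
      · exact Or.inl (mem_biUnion huC hzu)
      · exact Or.inr (mem_biUnion ⟨hu, huC⟩ hzu)
  obtain ⟨u, hu, hyu⟩ := mem_iUnion₂.mp (hXC hy.1)
  exact (hC u hu w hw y hyu hy.2).2

theorem subset_iUnion_cell_disc (hX : IsPreconnected X) (hr : √(n - 1) / 2 ≤ r)
    (hne : (disc n X r).Nonempty) : X ⊆ ⋃ v ∈ disc n X r, cell v := by
  intro x hx
  rw [mem_iUnion₂]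
  by_cases hgood : dist (toE n (roundPt x)) x ≤ r
  · exact ⟨_, mem_disc.mpr ⟨x, hx, hgood⟩, mem_cell_roundPt x⟩
  set b : Fin n → ℤ := fun i => ⌊x i⌋
  have hxb : x ∈ openCube b :=
    mem_openCube_of_mem_closedCube hr (mem_closedCube_floor x) (not_le.mp hgood)
  suffices ∃ z ∈ X ∩ closedCube b, dist (toE n (roundPt z)) z ≤ r by
    obtain ⟨z, ⟨hzX, hzb⟩, hz⟩ := this
    exact ⟨_, mem_disc.mpr ⟨z, hzX, hz⟩, mem_cell_roundPt_of_mem_closedCube hzb hxb⟩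
  -- Otherwise `X ∩ openCube b` would be closed in `X`, since far points avoid the faces.
  by_contra! hfar
  have hXb : X ⊆ openCube b :=
    hX.subset_of_closure_inter_subset isOpen_openCube ⟨x, hx, hxb⟩ fun z ⟨hzcl, hzX⟩ =>
      mem_openCube_of_mem_closedCube hr (closure_openCube_subset hzcl)
        (hfar z ⟨hzX, closure_openCube_subset hzcl⟩)
  obtain ⟨s, hs⟩ := hne
  obtain ⟨y, hy, hsy⟩ := mem_disc.mp hs
  exact (hfar y ⟨hy, closure_openCube_subset (subset_closure (hXb hy))⟩).not_ge
    ((dist_toE_roundPt_le s).trans hsy)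

end Connectivity

end

theorem disc_zero_conn_of_connected_general (n : ℕ)
    (X : Set (EuclideanSpace ℝ (Fin n))) (hX : IsConnected X)
    (r : ℝ) (hr : Real.sqrt (n - 1) / 2 ≤ r) :
    kConn n 0 (disc n X r) := by
  intro p hp q hq
  obtain ⟨x, hx, hpx⟩ := mem_disc.mp hp
  obtain ⟨y, hy, hqy⟩ := mem_disc.mp hq
  have hxy : ReflTransGen (kStep n 0 (disc n X r)) (roundPt x) (roundPt y) :=
    reflTransGen_of_isPreconnected hX.isPreconnected
      (subset_iUnion_cell_disc hX.isPreconnected hr ⟨p, hp⟩)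
      (mem_disc.mpr ⟨x, hx, (dist_toE_roundPt_le p).trans hpx⟩)
      (mem_disc.mpr ⟨y, hy, (dist_toE_roundPt_le q).trans hqy⟩)
      ⟨hx, mem_cell_roundPt x⟩ ⟨hy, mem_cell_roundPt y⟩
  exact (reflTransGen_roundPt_disc hx hpx).trans
    (hxy.trans (reflTransGen_kStep_symm (reflTransGen_roundPt_disc hy hqy)))

/-- If `X ⊆ ℝ^n` (`n ≥ 2`) is connected, then for every `r ≥ √(n-1) / 2` the `r`-offset
discretization of `X` is `0`-connected. -/
theorem disc_zero_conn_of_connected (n : ℕ) (hn : 2 ≤ n)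
    (X : Set (EuclideanSpace ℝ (Fin n))) (hX : IsConnected X)
    (r : ℝ) (hr : Real.sqrt (n - 1) / 2 ≤ r) :
    kConn n 0 (disc n X r) :=
  disc_zero_conn_of_connected_general n X hX r hr
end
end
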